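/- Let G be a finite group and let H_1, …, H_t be subgroups of G such that G = H_1 ∪ … ∪ H_t and H_i ∩ H_j = {1} for all i ≠ j. Then for every nontrivial finite-dimensional complex irreducible representation V of G, one has |H_1|·dim V^{H_1} + |H_2|·dim V^{H_2} + … + |H_t|·dim V^{H_t} = (t − 1)·dim V, where V^{H} denotes the subspace of V of vectors fixed by every element of H. -/

import Mathlib

/-!
Averaging over a subgroup `H` gives `∑_{h ∈ H} χ(h) = |H| · dim V^H`, where `χ` is the character
of `V`. Since the `H i` cover `G` and overlap only in `1`, summing over `i` counts `χ(1) = dim V`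
exactly `t` times and every other value of `χ` once, so
`∑ i, |H i| · dim V^{H i} = (t - 1) · dim V + ∑_{g ∈ G} χ(g)`.
The last sum is `|G| · dim V^G`, which vanishes because an irreducible nontrivial
representation has no nonzero invariant vector.
-/

open Module Representation

namespace Representation

section CommRing

variable {k G V : Type*} [CommRing k] [Group G] [AddCommGroup V] [Module k V]

theorem invariants_eq_bot_of_irreducible (ρ : Representation k G V)
    (hirr : ∀ U : Submodule k V, (∀ g : G, ∀ v ∈ U, ρ g v ∈ U) → U = ⊥ ∨ U = ⊤)
    (hnontriv : ∃ (g : G) (v : V), ρ g v ≠ v) :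
    ρ.invariants = ⊥ := by
  have hstable : ∀ g : G, ∀ v ∈ ρ.invariants, ρ g v ∈ ρ.invariants := fun g v hv => by
    rwa [(mem_invariants ρ v).1 hv g]
  refine (hirr _ hstable).resolve_right fun htop => ?_
  obtain ⟨g, v, hgv⟩ := hnontriv
  exact hgv ((mem_invariants ρ v).1 (htop ▸ Submodule.mem_top) g)

end CommRing

theorem sum_character_eq_card_mul_finrank_invariants {k G V : Type*} [Field k] [Group G]
    [Fintype G] [AddCommGroup V] [Module k V] [FiniteDimensional k V]
    (ρ : Representation k G V) (hG : (Nat.card G : k) ≠ 0) :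
    ∑ g : G, ρ.character g = Nat.card G * finrank k ρ.invariants := by
  have : Invertible (Nat.card G : k) := invertibleOfNonzero hG
  rw [← card_inv_mul_sum_char_eq_finrank, mul_inv_cancel_left₀ hG]

end Representation

namespace Subgroup

variable {G ι : Type*} [Group G] [Fintype ι] {H : ι → Subgroup G}

theorem card_filter_mem_eq_one_of_partition
    (hcover : ∀ g : G, ∃ i, g ∈ H i) (hdisj : ∀ i j, i ≠ j → H i ⊓ H j = ⊥)
    [∀ g, DecidablePred fun i => g ∈ H i] {g : G} (hg : g ≠ 1) :
    (Finset.univ.filter fun i => g ∈ H i).card = 1 := by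
  obtain ⟨i, hi⟩ := hcover g
  refine Finset.card_eq_one.2 ⟨i, Finset.eq_singleton_iff_unique_mem.2 ⟨by simpa, ?_⟩⟩
  intro j hj
  by_contra hji
  have hmem : g ∈ H j ⊓ H i := Subgroup.mem_inf.2 ⟨(Finset.mem_filter.1 hj).2, hi⟩
  exact hg (Subgroup.mem_bot.1 (hdisj j i hji ▸ hmem))

theorem sum_sum_add_eq_of_partition [Fintype G] {M : Type*} [AddCommMonoid M]
    (hcover : ∀ g : G, ∃ i, g ∈ H i) (hdisj : ∀ i j, i ≠ j → H i ⊓ H j = ⊥)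
    [∀ i, Fintype (H i)] (f : G → M) :
    ∑ i, ∑ h : H i, f h + f 1 = Fintype.card ι • f 1 + ∑ g, f g := by
  classical
  have hcount : ∑ i, ∑ h : H i, f h =
      ∑ g, (Finset.univ.filter fun i => g ∈ H i).card • f g := by
    simp_rw [← Finset.sum_const, Finset.sum_filter]
    rw [Finset.sum_comm]
    refine Finset.sum_congr rfl fun i _ => ?_
    rw [← Finset.sum_filter]
    exact (Finset.sum_subtype _ (fun g => by simp) f).symm
  have hrest : ∀ g ∈ Finset.univ.erase (1 : G),
      (Finset.univ.filter fun i => g ∈ H i).card • f g = f g := fun g hg => by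
    rw [card_filter_mem_eq_one_of_partition hcover hdisj (Finset.ne_of_mem_erase hg), one_smul]
  rw [hcount, ← Finset.add_sum_erase _ _ (Finset.mem_univ 1),
    ← Finset.add_sum_erase _ _ (Finset.mem_univ 1), Finset.sum_congr rfl hrest]
  simp only [one_mem, Finset.filter_true, Finset.card_univ]
  abel

end Subgroup

/-- If the subgroups `H 1, …, H t` of a finite group `G` cover `G` and pairwise intersect
trivially, then for every nontrivial finite-dimensional complex irreducible representation
`ρ` of `G` on `V` one has `∑ i, |H i| · dim V^{H i} = (t - 1) · dim V`. -/
theorem sum_card_mul_finrank_invariants {G : Type*} [Group G] [Fintype G] {t : ℕ}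
    (H : Fin t → Subgroup G)
    (hcover : ∀ g : G, ∃ i : Fin t, g ∈ H i)
    (hdisj : ∀ i j : Fin t, i ≠ j → H i ⊓ H j = ⊥)
    {V : Type*} [AddCommGroup V] [Module ℂ V] [FiniteDimensional ℂ V]
    (ρ : Representation ℂ G V)
    (hirr : ∀ U : Submodule ℂ V, (∀ g : G, ∀ v ∈ U, ρ g v ∈ U) → U = ⊥ ∨ U = ⊤)
    (hnontriv : ∃ (g : G) (v : V), ρ g v ≠ v) :
    ∑ i : Fin t,
        Nat.card (H i) *
          Module.finrank ℂ (Representation.invariants (ρ.comp (H i).subtype)) =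
      (t - 1) * Module.finrank ℂ V := by
  classical
  have key : ((∑ i, Nat.card (H i) *
      finrank ℂ (Representation.invariants (ρ.comp (H i).subtype)) + finrank ℂ V : ℕ) : ℂ) =
      ((t * finrank ℂ V : ℕ) : ℂ) := by
    calc _ = ∑ i, ∑ h : H i, ρ.character h + ρ.character 1 := by
          push_cast
          simp_rw [← sum_character_eq_card_mul_finrank_invariants _
            (Nat.cast_ne_zero.2 Nat.card_pos.ne'), char_one]
          rfl
      _ = t • ρ.character 1 + ∑ g, ρ.character g := by
          simpa using Subgroup.sum_sum_add_eq_of_partition hcover hdisj ρ.character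
      _ = _ := by
          rw [sum_character_eq_card_mul_finrank_invariants _ (by simp),
            ρ.invariants_eq_bot_of_irreducible hirr hnontriv]
          simp
  rw [Nat.sub_one_mul]
  exact Nat.eq_sub_of_add_eq (Nat.cast_injective key)
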